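/- Let F : C → D be a full and essentially surjective k-linear tensor functor between essentially small rigid k-linear tensor categories. Then the essential image of F* : Fun_k(D, Mod_k) → Fun_k(C, Mod_k) is a tensor ideal for Day convolution: if M is any object of Fun_k(C, Mod_k) and N is in the essential image of F*, then M ⊗_C N is in the essential image of F*. -/

import Mathlib

/-!
Statement 11: Let `F : C ⥤ D` be a full and essentially surjective `k`-linear tensor
functor between essentially small rigid `k`-linear tensor categories.  Then the essential
image of the (fully faithful) restriction functor
`F* : Fun_k(D, Mod_k) ⥤ Fun_k(C, Mod_k)` is a tensor ideal for Day convolution: if `M` is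
any `k`-linear functor `C ⥤ Mod_k` and `N` is in the essential image of `F*`, then
`M ⊗_C N` is in the essential image of `F*`.

The Day convolution is computed pointwise by the `k`-linear coend
`(M ⊗_C N)(c) = ∫^{(u,v)} C(u ⊗ v, c) ⊗ M(u) ⊗ N(v)` (a quotient of a direct sum, via the
unbundled `CoendData` below); membership of `M ⊗_C N` in the essential image of `F*` is
expressed by a family of isomorphisms `(M ⊗_C N)(c) ≅ P(F c)`, natural in `c`, for some
`k`-linear functor `P : D ⥤ Mod_k`.
-/

open CategoryTheory TensorProduct DirectSum MonoidalCategory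

universe u

variable (k : Type u) [CommRing k]

/-- Unbundled data for a `k`-linear coend `∫^{c ∈ E} H(c,c)`. -/
structure CoendData (E : Type u) [Category.{u} E] : Type (u + 1) where
  obj : E → E → ModuleCat.{u} k
  left : ∀ {c c' : E} (d : E), (c' ⟶ c) → (obj c d →ₗ[k] obj c' d)
  right : ∀ (c : E) {d d' : E}, (d ⟶ d') → (obj c d →ₗ[k] obj c d')

variable {k} {E : Type u} [Category.{u} E]

/-- The submodule of relations defining the coend. -/
noncomputable def CoendData.relations (H : CoendData k E) :
    Submodule k (⨁ c : E, (H.obj c c : Type u)) :=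
  letI := Classical.decEq E
  Submodule.span k {z | ∃ (c c' : E) (α : c' ⟶ c) (y : H.obj c c'),
    z = DirectSum.lof k E (fun c => (H.obj c c : Type u)) c' (H.left c' α y)
      - DirectSum.lof k E (fun c => (H.obj c c : Type u)) c (H.right c α y)}

/-- The `k`-linear coend `∫^{c} H(c,c)`. -/
noncomputable def CoendData.Coend (H : CoendData k E) : Type u :=
  (⨁ c : E, (H.obj c c : Type u)) ⧸ H.relations

noncomputable instance (H : CoendData k E) : AddCommGroup H.Coend :=
  inferInstanceAs (AddCommGroup ((⨁ c : E, (H.obj c c : Type u)) ⧸ H.relations))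

noncomputable instance (H : CoendData k E) : Module k H.Coend :=
  inferInstanceAs (Module k ((⨁ c : E, (H.obj c c : Type u)) ⧸ H.relations))

/-- The generator `[x]_c` of the coend. -/
noncomputable def CoendData.gen (H : CoendData k E) (c : E) (x : H.obj c c) : H.Coend :=
  letI := Classical.decEq E
  Submodule.Quotient.mk (DirectSum.lof k E (fun c => (H.obj c c : Type u)) c x)

section Ideal

variable (k)
variable {C D : Type u} [Category.{u} C] [Category.{u} D]
  [Preadditive C] [Linear k C] [MonoidalCategory C] [SymmetricCategory C]
  [MonoidalPreadditive C] [MonoidalLinear k C] [RigidCategory C]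
  [Preadditive D] [Linear k D] [MonoidalCategory D] [SymmetricCategory D]
  [MonoidalPreadditive D] [MonoidalLinear k D] [RigidCategory D]

/-- The coend data computing the Day convolution
`(M ⊗_C N)(c) = ∫^{(u,v)} C(u ⊗ v, c) ⊗_k M(u) ⊗_k N(v)`. -/
noncomputable def dayData (M N : C ⥤ ModuleCat.{u} k) (c : C) : CoendData k (C × C) where
  obj p q := ModuleCat.of k
    (((p.1 ⊗ p.2 : C) ⟶ c) ⊗[k] ((M.obj q.1 : Type u) ⊗[k] (N.obj q.2 : Type u)))
  left q φ := TensorProduct.map (Linear.leftComp k c (φ.1 ⊗ₘ φ.2)) LinearMap.id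
  right p {q q'} ψ := TensorProduct.map LinearMap.id
    (TensorProduct.map (M.map ψ.1).hom (N.map ψ.2).hom)

/-- `P` is a `k`-linear functor (additive and `k`-linear). -/
def IsKLinearFun (P : D ⥤ ModuleCat.{u} k) : Prop :=
  ∃ h : P.Additive, @Functor.Linear k _ D (ModuleCat.{u} k) _ _ _ _ _ _ P

end Ideal

/-!
Write `G = M ⊗_C N`, a `k`-linear functor `C ⥤ Mod_k`. Since `F` is full and essentially
surjective, `G` factors through `F` as soon as it kills every morphism `δ` with `F δ = 0`.
For such `δ` and a generator `[g ⊗ m ⊗ n]` of `G(c)` with `g : u ⊗ v ⟶ c`, rigidity writes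
`g ≫ δ = (u ◁ gᵀ) ≫ ev` with `gᵀ : v ⟶ ᘁu ⊗ c'` the transpose of `g ≫ δ`. As `F` is monoidal,
`F gᵀ = 0`, hence `N gᵀ = 0` because `N` factors through `F`; the coend relation moves `gᵀ`
onto `n`, so `[(g ≫ δ) ⊗ m ⊗ n] = [ev ⊗ m ⊗ N(gᵀ) n] = 0`.
-/

namespace CoendData

variable (H : CoendData k E) {Q : Type u} [AddCommGroup Q] [Module k Q]

noncomputable def genₗ (c : E) : H.obj c c →ₗ[k] H.Coend :=
  letI := Classical.decEq E
  H.relations.mkQ ∘ₗ DirectSum.lof k E (fun c => (H.obj c c : Type u)) c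

theorem gen_left_eq_gen_right {c c' : E} (α : c' ⟶ c) (y : H.obj c c') :
    H.gen c' (H.left c' α y) = H.gen c (H.right c α y) := by
  let _ := Classical.decEq E
  exact (Submodule.Quotient.eq _).2 (Submodule.subset_span ⟨c, c', α, y, rfl⟩)

variable {H} in
theorem hom_ext {f g : H.Coend →ₗ[k] Q} (h : ∀ c, f ∘ₗ H.genₗ c = g ∘ₗ H.genₗ c) : f = g := by
  let _ := Classical.decEq E
  exact Submodule.linearMap_qext _ (DirectSum.linearMap_ext _ h)

noncomputable def desc (φ : ∀ c : E, H.obj c c →ₗ[k] Q)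
    (hφ : ∀ {c c' : E} (α : c' ⟶ c), φ c' ∘ₗ H.left c' α = φ c ∘ₗ H.right c α) :
    H.Coend →ₗ[k] Q :=
  letI := Classical.decEq E
  H.relations.liftQ (DirectSum.toModule k E Q φ) <| Submodule.span_le.2 <| by
    rintro _ ⟨c, c', α, y, rfl⟩
    rw [SetLike.mem_coe, LinearMap.mem_ker, map_sub, DirectSum.toModule_lof,
      DirectSum.toModule_lof, sub_eq_zero]
    exact LinearMap.congr_fun (hφ α) y

@[simp] theorem desc_gen (φ : ∀ c : E, H.obj c c →ₗ[k] Q)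
    (hφ : ∀ {c c' : E} (α : c' ⟶ c), φ c' ∘ₗ H.left c' α = φ c ∘ₗ H.right c α)
    (c : E) (x : H.obj c c) : H.desc φ hφ (H.gen c x) = φ c x := by
  let _ := Classical.decEq E
  exact DirectSum.toModule_lof k (φ := φ) c x

end CoendData

namespace CategoryTheory.Functor

theorem exists_comp_iso_of_full_of_essSurj {C D A : Type*} [Category* C] [Category* D]
    [Category* A] (F : C ⥤ D) [F.Full] [F.EssSurj] (G : C ⥤ A)
    (hG : ∀ ⦃X Y : C⦄ (f f' : X ⟶ Y), F.map f = F.map f' → G.map f = G.map f') :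
    ∃ P : D ⥤ A, Nonempty (F ⋙ P ≅ G) := by
  let L := (Quotient.lift F.homRel F fun _ _ _ _ h => h).asEquivalence
  refine ⟨L.inverse ⋙ Quotient.lift F.homRel G hG, ⟨?_⟩⟩
  exact isoWhiskerLeft (Quotient.functor F.homRel)
      (isoWhiskerRight L.unitIso.symm (Quotient.lift F.homRel G hG)) ≪≫
    Quotient.lift.isLift F.homRel G hG

theorem Monoidal.map_whiskerLeft_eq_zero {C D : Type*} [Category* C]
    [MonoidalCategory C] [Category* D] [Preadditive D] [MonoidalCategory D]
    [MonoidalPreadditive D] (F : C ⥤ D) [F.Monoidal] (X : C) {Y Z : C} {h : Y ⟶ Z}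
    (hh : F.map h = 0) : F.map (X ◁ h) = 0 := by
  rw [Functor.Monoidal.map_whiskerLeft, hh, MonoidalPreadditive.whiskerLeft_zero,
    Limits.zero_comp, Limits.comp_zero]

end CategoryTheory.Functor

section Day

variable {C : Type u} [Category.{u} C] [Preadditive C] [Linear k C] [MonoidalCategory C]
  (M N : C ⥤ ModuleCat.{u} k)

noncomputable def dayGen {c u v : C} (g : u ⊗ v ⟶ c) (m : M.obj u) (n : N.obj v) :
    (dayData k M N c).Coend :=
  (dayData k M N c).gen (u, v)
    (show ((u ⊗ v : C) ⟶ c) ⊗[k] ((M.obj u : Type u) ⊗[k] (N.obj v : Type u)) from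
      g ⊗ₜ (m ⊗ₜ n))

theorem dayGen_tensorHom_comp {c u u' v v' : C} (a : u' ⟶ u) (b : v' ⟶ v) (g : u ⊗ v ⟶ c)
    (m : M.obj u') (n : N.obj v') :
    dayGen M N ((a ⊗ₘ b) ≫ g) m n = dayGen M N g ((M.map a).hom m) ((N.map b).hom n) :=
  (dayData k M N c).gen_left_eq_gen_right (c := (u, v)) (c' := (u', v')) (a, b) (g ⊗ₜ (m ⊗ₜ n))

theorem dayGen_add {c u v : C} (g g' : u ⊗ v ⟶ c) (m : M.obj u) (n : N.obj v) :
    dayGen M N (g + g') m n = dayGen M N g m n + dayGen M N g' m n :=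
  (congrArg ((dayData k M N c).genₗ (u, v)) (TensorProduct.add_tmul g g' (m ⊗ₜ n))).trans
    (map_add _ _ _)

theorem dayGen_smul {c u v : C} (r : k) (g : u ⊗ v ⟶ c) (m : M.obj u) (n : N.obj v) :
    dayGen M N (r • g) m n = r • dayGen M N g m n :=
  (congrArg ((dayData k M N c).genₗ (u, v)) (TensorProduct.smul_tmul' r g (m ⊗ₜ n)).symm).trans
    (map_smul _ _ _)

theorem dayGen_zero_right {c u v : C} (g : u ⊗ v ⟶ c) (m : M.obj u) :
    dayGen M N g m (0 : N.obj v) = 0 :=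
  have h : g ⊗ₜ[k] (m ⊗ₜ[k] (0 : N.obj v)) = 0 := by
    rw [TensorProduct.tmul_zero, TensorProduct.tmul_zero]
  (congrArg ((dayData k M N c).genₗ (u, v)) h).trans (map_zero _)

theorem dayCoend_hom_ext {c : C} {Q : Type u} [AddCommGroup Q] [Module k Q]
    {f f' : (dayData k M N c).Coend →ₗ[k] Q}
    (h : ∀ (u v : C) (g : u ⊗ v ⟶ c) (m : M.obj u) (n : N.obj v),
      f (dayGen M N g m n) = f' (dayGen M N g m n)) : f = f' :=
  CoendData.hom_ext fun p => TensorProduct.ext_threefold' fun g m n => h p.1 p.2 g m n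

noncomputable def dayPostcomp {c c' : C} (f : c ⟶ c') (p : C × C) :
    (dayData k M N c).obj p p →ₗ[k] (dayData k M N c').Coend :=
  (dayData k M N c').genₗ p ∘ₗ TensorProduct.map (Linear.rightComp k _ f) .id

theorem dayPostcomp_dinatural {c c' : C} (f : c ⟶ c') {p p' : C × C} (α : p' ⟶ p) :
    dayPostcomp M N f p' ∘ₗ (dayData k M N c).left p' α =
      dayPostcomp M N f p ∘ₗ (dayData k M N c).right p α :=
  TensorProduct.ext_threefold' fun g m n => by
    show dayGen M N (((α.1 ⊗ₘ α.2) ≫ g) ≫ f) m n =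
      dayGen M N (g ≫ f) ((M.map α.1).hom m) ((N.map α.2).hom n)
    rw [Category.assoc]
    exact dayGen_tensorHom_comp M N α.1 α.2 (g ≫ f) m n

noncomputable def dayMap {c c' : C} (f : c ⟶ c') :
    (dayData k M N c).Coend →ₗ[k] (dayData k M N c').Coend :=
  (dayData k M N c).desc (dayPostcomp M N f) (dayPostcomp_dinatural M N f)

theorem dayMap_dayGen {c c' u v : C} (f : c ⟶ c') (g : u ⊗ v ⟶ c) (m : M.obj u)
    (n : N.obj v) : dayMap M N f (dayGen M N g m n) = dayGen M N (g ≫ f) m n :=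
  (dayData k M N c).desc_gen _ (dayPostcomp_dinatural M N f) (u, v) _

theorem dayMap_id (c : C) : dayMap M N (𝟙 c) = .id :=
  dayCoend_hom_ext M N fun u v g m n => by rw [dayMap_dayGen, Category.comp_id, LinearMap.id_apply]

theorem dayMap_comp {c c' c'' : C} (f : c ⟶ c') (f' : c' ⟶ c'') :
    dayMap M N (f ≫ f') = dayMap M N f' ∘ₗ dayMap M N f :=
  dayCoend_hom_ext M N fun u v g m n => by
    rw [LinearMap.comp_apply, dayMap_dayGen, dayMap_dayGen, dayMap_dayGen, Category.assoc]

theorem dayMap_add {c c' : C} (f f' : c ⟶ c') :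
    dayMap M N (f + f') = dayMap M N f + dayMap M N f' :=
  dayCoend_hom_ext M N fun u v g m n => by
    rw [LinearMap.add_apply, dayMap_dayGen, dayMap_dayGen, dayMap_dayGen, Preadditive.comp_add,
      dayGen_add]

theorem dayMap_smul {c c' : C} (r : k) (f : c ⟶ c') : dayMap M N (r • f) = r • dayMap M N f :=
  dayCoend_hom_ext M N fun u v g m n => by
    rw [LinearMap.smul_apply, dayMap_dayGen, dayMap_dayGen, Linear.comp_smul, dayGen_smul]

theorem dayGen_eq_zero_of_map_transpose_eq_zero {c u v : C} (u' : C) [ExactPairing u' u]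
    (g : u ⊗ v ⟶ c) (m : M.obj u) (n : N.obj v)
    (hg : N.map (tensorLeftHomEquiv v u' u c g) = 0) : dayGen M N g m n = 0 := by
  have hg_factor : g = (𝟙 u ⊗ₘ tensorLeftHomEquiv v u' u c g) ≫
      ((α_ u u' c).inv ≫ ε_ u' u ▷ c ≫ (λ_ c).hom) := by
    rw [id_tensorHom]
    exact ((tensorLeftHomEquiv v u' u c).symm_apply_apply g).symm
  rw [hg_factor, dayGen_tensorHom_comp, hg, ModuleCat.hom_zero, LinearMap.zero_apply,
    dayGen_zero_right]

theorem dayMap_eq_zero [LeftRigidCategory C] {D : Type*} [Category* D] [Preadditive D]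
    [MonoidalCategory D] [MonoidalPreadditive D] (F : C ⥤ D) [F.Monoidal]
    (hN : ∀ ⦃v w : C⦄ (h : v ⟶ w), F.map h = 0 → N.map h = 0)
    {c c' : C} (δ : c ⟶ c') (hδ : F.map δ = 0) : dayMap M N δ = 0 :=
  dayCoend_hom_ext M N fun u v g m n => by
    rw [dayMap_dayGen, LinearMap.zero_apply]
    refine dayGen_eq_zero_of_map_transpose_eq_zero M N (ᘁu) _ m n (hN _ ?_)
    have hgδ : F.map (g ≫ δ) = 0 := by rw [F.map_comp, hδ, Limits.comp_zero]
    rw [tensorLeftHomEquiv, Equiv.coe_fn_mk, F.map_comp, F.map_comp, F.map_comp,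
      Functor.Monoidal.map_whiskerLeft_eq_zero F _ hgδ, Limits.comp_zero, Limits.comp_zero,
      Limits.comp_zero]

noncomputable def dayFunctor : C ⥤ ModuleCat.{u} k where
  obj c := ModuleCat.of k (dayData k M N c).Coend
  map f := ModuleCat.ofHom (dayMap M N f)
  map_id c := ModuleCat.hom_ext (dayMap_id M N c)
  map_comp f f' := ModuleCat.hom_ext (dayMap_comp M N f f')

instance : (dayFunctor M N).Additive where
  map_add {_ _ f f'} := ModuleCat.hom_ext (dayMap_add M N f f')

instance : (dayFunctor M N).Linear k where
  map_smul {_ _} f r := ModuleCat.hom_ext (dayMap_smul M N r f)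

end Day

section Ideal

variable (k)
variable {C D : Type u} [Category.{u} C] [Category.{u} D]
  [Preadditive C] [Linear k C] [MonoidalCategory C] [SymmetricCategory C]
  [MonoidalPreadditive C] [MonoidalLinear k C] [RigidCategory C]
  [Preadditive D] [Linear k D] [MonoidalCategory D] [SymmetricCategory D]
  [MonoidalPreadditive D] [MonoidalLinear k D] [RigidCategory D]

theorem essImage_restriction_tensor_ideal
    (F : C ⥤ D) [F.Additive] [F.Linear k] [F.Monoidal]
    (hFull : F.Full) (hEssSurj : F.EssSurj)
    (M N : C ⥤ ModuleCat.{u} k)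
    (hN : ∃ N₀ : D ⥤ ModuleCat.{u} k, IsKLinearFun k N₀ ∧ Nonempty (F ⋙ N₀ ≅ N)) :
    ∃ (P : D ⥤ ModuleCat.{u} k) (_ : IsKLinearFun k P)
      (e : ∀ c : C, (dayData k M N c).Coend ≃ₗ[k] P.obj (F.obj c)),
      ∀ (c c' : C) (f : c ⟶ c') (u v : C) (g : (u ⊗ v : C) ⟶ c)
        (m : M.obj u) (n : N.obj v),
        e c' ((dayData k M N c').gen (u, v)
            (show (((u ⊗ v : C) ⟶ c') ⊗[k]
                ((M.obj u : Type u) ⊗[k] (N.obj v : Type u))) from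
              (g ≫ f) ⊗ₜ (m ⊗ₜ n))) =
          P.map (F.map f)
            (e c ((dayData k M N c).gen (u, v)
              (show (((u ⊗ v : C) ⟶ c) ⊗[k]
                  ((M.obj u : Type u) ⊗[k] (N.obj v : Type u))) from
                g ⊗ₜ (m ⊗ₜ n)))) := by
  obtain ⟨N₀, ⟨_, _⟩, ⟨eN⟩⟩ := hN
  have hNF : ∀ ⦃v w : C⦄ (h : v ⟶ w), F.map h = 0 → N.map h = 0 := fun v w h hh => by
    rw [← NatIso.naturality_1 eN h, Functor.comp_map, hh, Functor.map_zero, Limits.zero_comp,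
      Limits.comp_zero]
  obtain ⟨P, ⟨eP⟩⟩ := Functor.exists_comp_iso_of_full_of_essSurj F (dayFunctor M N)
    fun c c' f f' hf => by
      rw [← sub_eq_zero, ← Functor.map_sub]
      exact ModuleCat.hom_ext (dayMap_eq_zero M N F hNF _ (by rw [F.map_sub, hf, sub_self]))
  have := Functor.additive_of_iso eP.symm
  have := Functor.linear_of_iso k eP.symm
  refine ⟨P, ⟨F.additive_of_full_essSurj_comp P, F.linear_of_full_essSurj_comp P⟩,
    fun c => (eP.app c).symm.toLinearEquiv, fun c c' f u v g m n => ?_⟩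
  show (eP.inv.app c').hom (dayGen M N (g ≫ f) m n) =
    (P.map (F.map f)).hom ((eP.inv.app c).hom (dayGen M N g m n))
  rw [← dayMap_dayGen]
  exact ConcreteCategory.congr_hom (eP.inv.naturality f) (dayGen M N g m n)

end Ideal
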